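/- arXiv:math/0611309 — 6 statements merged into one kernel-verified Lean document; each statement's English description precedes it below -/
import Mathlib

section
/- Let 𝔄 be a C*-algebra, K a set, and for each g ∈ K let τ_g : 𝔄 → 𝔄 be a *-homomorphism. Assume that 𝔄 is generated (as a C*-algebra) by a subset 𝔙 ⊂ 𝔄 for which τ_g(𝔙) ⊂ p(𝔙) for every g ∈ K, and assume that the orbit (τ_g(A))_{g∈K} is totally bounded in 𝔄 (with respect to the C*-norm) for every A ∈ 𝔙. Then (τ_g(A))_{g∈K} is totally bounded in 𝔄 for every A ∈ 𝔄. -/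
section Aux

variable {𝔄 : Type*} [NonUnitalNormedRing 𝔄] [CompleteSpace 𝔄]

private lemma tb_compact_closure {s : Set 𝔄} (hs : TotallyBounded s) :
    IsCompact (closure s) :=
  TotallyBounded.isCompact_of_isClosed (totallyBounded_closure.mpr hs) isClosed_closure

private lemma tb_map2 {K : Type*} {f h : K → 𝔄} (op : 𝔄 → 𝔄 → 𝔄)
    (hop : Continuous fun p : 𝔄 × 𝔄 => op p.1 p.2)
    (hf : TotallyBounded (Set.range f)) (hh : TotallyBounded (Set.range h)) :
    TotallyBounded (Set.range fun g => op (f g) (h g)) := by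
  have hc : IsCompact ((fun p : 𝔄 × 𝔄 => op p.1 p.2) ''
      (closure (Set.range f) ×ˢ closure (Set.range h))) :=
    ((tb_compact_closure hf).prod (tb_compact_closure hh)).image hop
  refine hc.totallyBounded.subset ?_
  rintro _ ⟨g, rfl⟩
  exact ⟨(f g, h g), ⟨subset_closure ⟨g, rfl⟩, subset_closure ⟨g, rfl⟩⟩, rfl⟩

end Aux

/-- Proposition 2.7: let `𝔄` be a C*-algebra, `K` a set, and `τ_g : 𝔄 → 𝔄` a
*-homomorphism for each `g ∈ K`.  Assume that `𝔄` is generated by a subset `𝔙 ⊆ 𝔄`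
(i.e. `p(𝔙)`, the non-unital *-subalgebra generated by `𝔙`, is dense in `𝔄`), that
`τ_g(𝔙) ⊆ p(𝔙)` for every `g ∈ K`, and that the orbit `(τ_g(A))_{g∈K}` is totally
bounded in `𝔄` for every `A ∈ 𝔙`.  Then `(τ_g(A))_{g∈K}` is totally bounded in `𝔄`
for every `A ∈ 𝔄`. -/
theorem totallyBounded_orbit_of_generating
    {𝔄 : Type*} [NormedRing 𝔄] [StarRing 𝔄] [CStarRing 𝔄] [NormedAlgebra ℂ 𝔄]
    [StarModule ℂ 𝔄] [CompleteSpace 𝔄]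
    {K : Type*} (τ : K → 𝔄 →⋆ₙₐ[ℂ] 𝔄) (𝔙 : Set 𝔄)
    (hgen : Dense ((NonUnitalStarAlgebra.adjoin ℂ 𝔙 : NonUnitalStarSubalgebra ℂ 𝔄) : Set 𝔄))
    (hτ𝔙 : ∀ g : K, ∀ A ∈ 𝔙, τ g A ∈ NonUnitalStarAlgebra.adjoin ℂ 𝔙)
    (h : ∀ A ∈ 𝔙, TotallyBounded (Set.range fun g : K => τ g A)) :
    ∀ A : 𝔄, TotallyBounded (Set.range fun g : K => τ g A) := by
  classical
  letI : NonUnitalCStarAlgebra 𝔄 :=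
    { (inferInstance : NonUnitalNormedRing 𝔄), (inferInstance : StarRing 𝔄),
      (inferInstance : CStarRing 𝔄), (inferInstance : CompleteSpace 𝔄),
      (inferInstance : NormedSpace ℂ 𝔄), (inferInstance : IsScalarTower ℂ 𝔄 𝔄),
      (inferInstance : SMulCommClass ℂ 𝔄 𝔄), (inferInstance : StarModule ℂ 𝔄) with }
  -- contractivity of star homomorphisms
  have contract : ∀ (g : K) (A : 𝔄), ‖τ g A‖ ≤ ‖A‖ := fun g A =>
    NonUnitalStarAlgHom.norm_apply_le (τ g) A
  -- Step 1: the statement holds on the generated *-subalgebra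
  have key : ∀ A ∈ NonUnitalStarAlgebra.adjoin ℂ 𝔙,
      TotallyBounded (Set.range fun g : K => τ g A) := by
    intro A hA
    induction hA using NonUnitalStarAlgebra.adjoin_induction with
    | mem x hx => exact h x hx
    | add x y _ _ hx hy =>
        have := tb_map2 (· + ·) (by fun_prop) hx hy
        refine this.subset ?_
        rintro _ ⟨g, rfl⟩
        exact ⟨g, by simp [map_add]⟩
    | zero =>
        refine (Set.finite_singleton (0 : 𝔄)).totallyBounded.subset ?_
        rintro _ ⟨g, rfl⟩
        simp
    | mul x y _ _ hx hy =>
        have := tb_map2 (· * ·) (by fun_prop) hx hy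
        refine this.subset ?_
        rintro _ ⟨g, rfl⟩
        exact ⟨g, by simp [map_mul]⟩
    | smul c x _ hx =>
        have := hx.image (uniformContinuous_const_smul (M := ℂ) c)
        refine this.subset ?_
        rintro _ ⟨g, rfl⟩
        exact ⟨τ g x, ⟨g, rfl⟩, by simp [map_smul]⟩
    | star x _ hx =>
        have := hx.image (star_isometry (E := 𝔄)).uniformContinuous
        refine this.subset ?_
        rintro _ ⟨g, rfl⟩
        exact ⟨τ g x, ⟨g, rfl⟩, by simp [map_star]⟩
  -- Step 2: approximation argument
  intro A
  rw [Metric.totallyBounded_iff]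
  intro ε hε
  obtain ⟨B, hB, hAB⟩ := Metric.dense_iff.mp hgen A (ε / 2) (by positivity)
  have hBtb := key B hAB
  obtain ⟨t, ht, hcov⟩ := Metric.totallyBounded_iff.mp hBtb (ε / 2) (by positivity)
  refine ⟨t, ht, ?_⟩
  rintro _ ⟨g, rfl⟩
  obtain ⟨y, hy, hmem⟩ := Set.mem_iUnion₂.mp (hcov ⟨g, rfl⟩)
  refine Set.mem_iUnion₂.mpr ⟨y, hy, ?_⟩
  have h1 : ‖τ g A - τ g B‖ ≤ ‖A - B‖ := by
    rw [← map_sub]; exact contract g (A - B)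
  have h2 : dist (τ g B) y < ε / 2 := hmem
  have h3 : ‖A - B‖ < ε / 2 := by
    have := hB
    rw [Metric.mem_ball, dist_comm, dist_eq_norm] at this
    exact this
  calc dist (τ g A) y ≤ dist (τ g A) (τ g B) + dist (τ g B) y := dist_triangle _ _ _
    _ < ε / 2 + ε / 2 := by
        refine add_lt_add_of_lt_of_lt ?_ h2
        rw [dist_eq_norm]
        exact lt_of_le_of_lt h1 h3
    _ = ε := add_halves ε
end

section
/- Let (K, Σ, μ) be a right invariant measure semigroup which has the right cancellation property (g₁h = g₂h implies g₁ = g₂) and contains a Følner net (Λ_α). For each α in the directed set of the net choose any g_α ∈ K. Then the net (Λ_α g_α) is also a Følner net in (K, Σ, μ). -/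
open Filter MeasureTheory
open scoped symmDiff ENNReal

/-- A net `(Λ_α)` of measurable sets in a measure semigroup `(K, Σ, μ)` is a Følner net
if left translates of measurable sets are measurable, `0 < μ(Λ_α) < ∞` for `α` large
enough, and `μ(Λ_α Δ (gΛ_α))/μ(Λ_α) → 0` for every `g ∈ K`. -/
def IsFolnerNet {K : Type*} [Semigroup K] [MeasurableSpace K]
    {ι : Type*} [Preorder ι] (μ : Measure K) (Λ : ι → Set K) : Prop :=
  (∀ (g : K) (S : Set K), MeasurableSet S → MeasurableSet ((g * ·) '' S)) ∧
  (∀ α, MeasurableSet (Λ α)) ∧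
  (∀ᶠ α in atTop, 0 < μ (Λ α) ∧ μ (Λ α) < ∞) ∧
  (∀ g : K, Tendsto (fun α => μ ((Λ α) ∆ ((g * ·) '' Λ α)) / μ (Λ α)) atTop (nhds 0))

/-- Lemma 3.2: in a right invariant measure semigroup with the right cancellation
property, the right translate `(Λ_α g_α)` of a Følner net `(Λ_α)` by any choice of
elements `g_α ∈ K` is again a Følner net. -/
theorem isFolnerNet_mul_right
    {K : Type*} [Semigroup K] [MeasurableSpace K]
    {ι : Type*} [Preorder ι] [Nonempty ι] [IsDirected ι (· ≤ ·)]
    (μ : Measure K)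
    (hcancel : ∀ a b c : K, a * c = b * c → a = b)
    (hinv_meas : ∀ (g : K) (S : Set K), MeasurableSet S → MeasurableSet ((· * g) '' S))
    (hinv : ∀ (g : K) (S : Set K), MeasurableSet S → μ ((· * g) '' S) = μ S)
    (Λ : ι → Set K) (hΛ : IsFolnerNet μ Λ) (gsel : ι → K) :
    IsFolnerNet μ (fun α => (· * gsel α) '' Λ α) := by
  obtain ⟨hmeasL, hmeasΛ, hpos, hlim⟩ := hΛ
  have hinj : ∀ g : K, Function.Injective (· * g) := fun g a b h => hcancel a b g h
  refine ⟨hmeasL, fun α => hinv_meas _ _ (hmeasΛ α), ?_, ?_⟩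
  · filter_upwards [hpos] with α hα
    rw [hinv _ _ (hmeasΛ α)]
    exact hα
  · intro g
    have key : ∀ α, μ (((· * gsel α) '' Λ α) ∆ ((g * ·) '' ((· * gsel α) '' Λ α))) /
        μ ((· * gsel α) '' Λ α) = μ ((Λ α) ∆ ((g * ·) '' Λ α)) / μ (Λ α) := by
      intro α
      have hcomm : (g * ·) '' ((· * gsel α) '' Λ α) = (· * gsel α) '' ((g * ·) '' Λ α) := by
        rw [← Set.image_comp, ← Set.image_comp]
        simp [Function.comp_def, mul_assoc]
      rw [hcomm, ← Set.image_symmDiff (hinj (gsel α)),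
        hinv _ _ ((hmeasΛ α).symmDiff (hmeasL g _ (hmeasΛ α))), hinv _ _ (hmeasΛ α)]
    simpa only [key] using hlim g
end

section
/- Let (K, Σ, μ) be a right invariant measure semigroup. Assume that if V ⊂ K and Vg ∈ Σ for some g ∈ K, then V ∈ Σ. Let E ∈ Σ be relatively dense in K. Then there exist r ∈ ℕ and g₁, …, g_r ∈ K such that for each B ∈ Σ with μ(B) < ∞ there exists j ∈ {1, …, r} with μ((B g_j) ∩ E) ≥ μ(B)/r. -/
open MeasureTheory

/-- A subset `E` of a semigroup `K` is relatively dense if there exist `r ∈ ℕ` and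
`g₁, …, g_r ∈ K` such that `E ∩ {g g₁, …, g g_r} ≠ ∅` for all `g ∈ K`. -/
def RelativelyDense {K : Type*} [Semigroup K] (E : Set K) : Prop :=
  ∃ r : ℕ, 0 < r ∧ ∃ gs : Fin r → K, ∀ g : K, ∃ j : Fin r, g * gs j ∈ E

/-- Lemma 3.4: let `(K, Σ, μ)` be a right invariant measure semigroup such that
`V ⊂ K` with `Vg ∈ Σ` for some `g` implies `V ∈ Σ`, and let `E ∈ Σ` be relatively dense
in `K`.  Then there exist `r ∈ ℕ` and `g₁, …, g_r ∈ K` such that every `B ∈ Σ` with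
`μ(B) < ∞` satisfies `μ((B g_j) ∩ E) ≥ μ(B)/r` for some `j`. -/
theorem exists_translate_inter_measure_ge
    {K : Type*} [Semigroup K] [MeasurableSpace K] (μ : Measure K)
    (hinv_meas : ∀ (g : K) (S : Set K), MeasurableSet S → MeasurableSet ((· * g) '' S))
    (hinv : ∀ (g : K) (S : Set K), MeasurableSet S → μ ((· * g) '' S) = μ S)
    (hrefl : ∀ (V : Set K) (g : K), MeasurableSet ((· * g) '' V) → MeasurableSet V)
    (E : Set K) (hE_meas : MeasurableSet E) (hE : RelativelyDense E) :
    ∃ r : ℕ, 0 < r ∧ ∃ gs : Fin r → K,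
      ∀ B : Set K, MeasurableSet B → μ B < ⊤ →
        ∃ j : Fin r, μ B / r ≤ μ (((· * gs j) '' B) ∩ E) := by

  obtain ⟨r, hr, gs, hgs⟩ := hE
  refine ⟨r, hr, gs, ?_⟩
  intro B hB hBfin
  set f : Fin r → Set K := fun j => B ∩ (· * gs j) ⁻¹' E with hf
  have himg : ∀ j, (· * gs j) '' (f j) = ((· * gs j) '' B) ∩ E := fun j =>
    Set.image_inter_preimage _ _ _
  have hmeas : ∀ j, MeasurableSet (f j) := by
    intro j
    apply hrefl _ (gs j)
    rw [himg j]
    exact (hinv_meas (gs j) B hB).inter hE_meas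
  have hμ : ∀ j, μ (f j) = μ (((· * gs j) '' B) ∩ E) := by
    intro j; rw [← himg j, hinv _ _ (hmeas j)]
  have hcover : B ⊆ ⋃ j, f j := by
    intro b hb
    obtain ⟨j, hj⟩ := hgs b
    exact Set.mem_iUnion.2 ⟨j, hb, hj⟩
  have hsum : μ B ≤ ∑ j, μ (f j) :=
    (measure_mono hcover).trans (measure_iUnion_fintype_le μ f)
  obtain ⟨j, -, hjmax⟩ := Finset.exists_max_image Finset.univ (fun j => μ (f j))
    ⟨⟨0, hr⟩, Finset.mem_univ _⟩
  refine ⟨j, ?_⟩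
  rw [← hμ j, ENNReal.div_le_iff (by exact_mod_cast hr.ne') (by simp)]
  calc μ B ≤ ∑ i, μ (f i) := hsum
    _ ≤ ∑ _i : Fin r, μ (f j) := Finset.sum_le_sum fun i _ => hjmax i (Finset.mem_univ i)
    _ = μ (f j) * r := by simp [mul_comm]
end

section
/- Let (K, Σ, μ) be a Følner semigroup and let E ∈ Σ be relatively dense in K. Then E has positive lower density relative to some Følner net in (K, Σ, μ); more precisely, if g₁, …, g_r witness the relative denseness of E, there is a Følner net (Λ'_α) with D_{(Λ'_α)}(E) ≥ 1/r. -/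
open Filter MeasureTheory
open scoped symmDiff ENNReal

/-- Lemma 3.5: let `(K, Σ, μ)` be a Følner semigroup (right cancellative, right
invariant, with the reflection property for `Σ`, containing a Følner net `(Λ_α)`), and
let `E ∈ Σ` be relatively dense in `K` with witnesses `g₁, …, g_r`.  Then there is a
Følner net `(Λ'_α)` relative to which `E` has lower density `D_{(Λ'_α)}(E) ≥ 1/r`; in
particular `E` has positive lower density relative to some Følner net. -/
theorem exists_folnerNet_lower_density_of_relativelyDense
    {K : Type*} [Semigroup K] [MeasurableSpace K]
    {ι : Type*} [Preorder ι] [Nonempty ι] [IsDirected ι (· ≤ ·)]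
    (μ : Measure K)
    (hcancel : ∀ a b c : K, a * c = b * c → a = b)
    (hinv_meas : ∀ (g : K) (S : Set K), MeasurableSet S → MeasurableSet ((· * g) '' S))
    (hinv : ∀ (g : K) (S : Set K), MeasurableSet S → μ ((· * g) '' S) = μ S)
    (hrefl : ∀ (V : Set K) (g : K), MeasurableSet ((· * g) '' V) → MeasurableSet V)
    (Λ : ι → Set K) (hΛ : IsFolnerNet μ Λ)
    (E : Set K) (hE_meas : MeasurableSet E)
    (r : ℕ) (hr : 0 < r) (gs : Fin r → K)
    (hE : ∀ g : K, ∃ j : Fin r, g * gs j ∈ E) :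
    ∃ Λ' : ι → Set K, IsFolnerNet μ Λ' ∧
      (1 : ℝ≥0∞) / r ≤ liminf (fun α => μ (Λ' α ∩ E) / μ (Λ' α)) atTop := by
  obtain ⟨hmeasL, hmeasΛ, hpos, htend⟩ := hΛ
  haveI : Nonempty (Fin r) := ⟨⟨0, hr⟩⟩
  set V : Fin r → Set K := fun j => {g | g * gs j ∈ E} with hVdef
  have hVmeas : ∀ j, MeasurableSet (V j) := by
    intro j
    apply hrefl _ (gs j)
    have himg : (· * gs j) '' V j = E ∩ ((· * gs j) '' Set.univ) := by
      ext x
      constructor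
      · rintro ⟨g, hg, rfl⟩; exact ⟨hg, g, trivial, rfl⟩
      · rintro ⟨hx, g, -, rfl⟩; exact ⟨g, hx, rfl⟩
    rw [himg]
    exact hE_meas.inter (hinv_meas _ _ MeasurableSet.univ)
  have hchoice : ∀ α, ∃ j : Fin r, ∀ j', μ (Λ α ∩ V j') ≤ μ (Λ α ∩ V j) := fun α =>
    Finite.exists_max fun j => μ (Λ α ∩ V j)
  choose j hj using hchoice
  have hinj : ∀ g : K, Function.Injective (· * g) := fun g a b h => hcancel a b g h
  refine ⟨fun α => (· * gs (j α)) '' Λ α, ⟨hmeasL, ?_, ?_, ?_⟩, ?_⟩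
  · exact fun α => hinv_meas _ _ (hmeasΛ α)
  · filter_upwards [hpos] with α hα
    rwa [hinv _ _ (hmeasΛ α)]
  · intro g
    have key : ∀ α, μ (((· * gs (j α)) '' Λ α) ∆ ((g * ·) '' ((· * gs (j α)) '' Λ α)))
        / μ ((· * gs (j α)) '' Λ α) = μ ((Λ α) ∆ ((g * ·) '' Λ α)) / μ (Λ α) := by
      intro α
      have hcomm : (g * ·) '' ((· * gs (j α)) '' Λ α) = (· * gs (j α)) '' ((g * ·) '' Λ α) := by
        rw [Set.image_image, Set.image_image]
        simp only [mul_assoc]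
      rw [hcomm, ← Set.image_symmDiff (hinj (gs (j α))),
        hinv _ _ ((hmeasΛ α).symmDiff (hmeasL g _ (hmeasΛ α))), hinv _ _ (hmeasΛ α)]
    simpa only [key] using htend g
  · have hbound : ∀ᶠ α in atTop,
        (1 : ℝ≥0∞) / r ≤ μ (((· * gs (j α)) '' Λ α) ∩ E) / μ ((· * gs (j α)) '' Λ α) := by
      filter_upwards [hpos] with α hα
      have hsub : (· * gs (j α)) '' (Λ α ∩ V (j α)) ⊆ ((· * gs (j α)) '' Λ α) ∩ E := by
        rintro x ⟨y, ⟨hy1, hy2⟩, rfl⟩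
        exact ⟨⟨y, hy1, rfl⟩, hy2⟩
      have h1 : μ (Λ α ∩ V (j α)) ≤ μ (((· * gs (j α)) '' Λ α) ∩ E) := by
        rw [← hinv (gs (j α)) _ ((hmeasΛ α).inter (hVmeas (j α)))]
        exact measure_mono hsub
      have hcover : Λ α ⊆ ⋃ j', Λ α ∩ V j' := by
        intro x hx
        obtain ⟨j', hj'⟩ := hE x
        exact Set.mem_iUnion.2 ⟨j', hx, hj'⟩
      have h2 : μ (Λ α) ≤ r * μ (Λ α ∩ V (j α)) := by
        calc μ (Λ α) ≤ ∑ j', μ (Λ α ∩ V j') :=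
              (measure_mono hcover).trans (measure_iUnion_fintype_le μ _)
          _ ≤ ∑ _j' : Fin r, μ (Λ α ∩ V (j α)) := Finset.sum_le_sum fun j' _ => hj α j'
          _ = r * μ (Λ α ∩ V (j α)) := by
              rw [Finset.sum_const, Finset.card_univ, Fintype.card_fin, nsmul_eq_mul]
      rw [hinv _ _ (hmeasΛ α)]
      rw [ENNReal.le_div_iff_mul_le (Or.inl hα.1.ne') (Or.inl hα.2.ne)]
      calc (1 : ℝ≥0∞) / r * μ (Λ α) ≤ 1 / r * (r * μ (Λ α ∩ V (j α))) :=
            mul_le_mul_right h2 _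
        _ = μ (Λ α ∩ V (j α)) := by
            rw [← mul_assoc, one_div, ENNReal.inv_mul_cancel
              (by exact_mod_cast hr.ne') (ENNReal.natCast_ne_top r), one_mul]
        _ ≤ _ := h1
    calc (1 : ℝ≥0∞) / r = liminf (fun _ : ι => (1 : ℝ≥0∞) / r) atTop := by
          rw [liminf_const]
      _ ≤ _ := liminf_le_liminf hbound
end

section
/- Let (K, Σ, μ) be a Følner semigroup, and f : K → ℝ a Σ-measurable function with f ≥ 0. Assume that f(g) ≥ a for some a > 0 and all g in some relatively dense set E ∈ Σ in K. Then there exists a Følner net (Λ_α) in (K, Σ, μ) such that liminf_α (1/μ(Λ_α)) ∫_{Λ_α} f dμ > 0. -/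
open Filter MeasureTheory
open scoped symmDiff ENNReal

/-- Proposition 3.6: let `(K, Σ, μ)` be a Følner semigroup (right cancellative, right
invariant, with the reflection property for `Σ`, containing a Følner net `(Λ_α)`), and
let `f : K → ℝ` be a nonnegative `Σ`-measurable function with `f(g) ≥ a` for some
`a > 0` and all `g` in a relatively dense measurable set `E`.  Then there exists a
Følner net `(Λ'_α)` such that `liminf_α (1/μ(Λ'_α)) ∫_{Λ'_α} f dμ > 0`. -/
theorem exists_folnerNet_liminf_integral_pos
    {K : Type*} [Semigroup K] [MeasurableSpace K]
    {ι : Type*} [Preorder ι] [Nonempty ι] [IsDirected ι (· ≤ ·)]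
    (μ : Measure K)
    (hcancel : ∀ a b c : K, a * c = b * c → a = b)
    (hinv_meas : ∀ (g : K) (S : Set K), MeasurableSet S → MeasurableSet ((· * g) '' S))
    (hinv : ∀ (g : K) (S : Set K), MeasurableSet S → μ ((· * g) '' S) = μ S)
    (hrefl : ∀ (V : Set K) (g : K), MeasurableSet ((· * g) '' V) → MeasurableSet V)
    (Λ : ι → Set K) (hΛ : IsFolnerNet μ Λ)
    (f : K → ℝ) (hf_meas : Measurable f) (hf_nonneg : ∀ g, 0 ≤ f g)
    (a : ℝ) (ha : 0 < a)
    (E : Set K) (hE_meas : MeasurableSet E) (hE : RelativelyDense E)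
    (hfE : ∀ g ∈ E, a ≤ f g) :
    ∃ Λ' : ι → Set K, IsFolnerNet μ Λ' ∧
      0 < liminf (fun α => (∫⁻ x in Λ' α, ENNReal.ofReal (f x) ∂μ) / μ (Λ' α)) atTop := by
  obtain ⟨r, hr, gs, hgs⟩ := hE
  obtain ⟨hleft, hmeas, hsize, hfol⟩ := hΛ
  -- right multiplication is injective
  have hinj : ∀ g : K, Function.Injective (· * g) := fun g x y h => hcancel x y g h
  -- the sets F j
  set F : Fin r → Set K := fun j => (· * gs j) ⁻¹' E with hF
  -- pigeonhole: for each α pick j with μ (Λ α) ≤ r * μ (Λ α ∩ F j)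
  have key : ∀ α : ι, ∃ j : Fin r, μ (Λ α) ≤ r * μ (Λ α ∩ F j) := by
    intro α
    obtain ⟨j, -, hj⟩ := Finset.exists_max_image (Finset.univ : Finset (Fin r))
      (fun j => μ (Λ α ∩ F j)) ⟨⟨0, hr⟩, Finset.mem_univ _⟩
    refine ⟨j, ?_⟩
    have hcov : Λ α ⊆ ⋃ i : Fin r, Λ α ∩ F i := by
      intro g hg
      obtain ⟨i, hi⟩ := hgs g
      exact Set.mem_iUnion.2 ⟨i, hg, hi⟩
    calc μ (Λ α) ≤ μ (⋃ i : Fin r, Λ α ∩ F i) := measure_mono hcov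
      _ ≤ ∑ i : Fin r, μ (Λ α ∩ F i) := measure_iUnion_fintype_le μ _
      _ ≤ (Finset.univ : Finset (Fin r)).card • μ (Λ α ∩ F j) :=
          Finset.sum_le_card_nsmul _ _ _ (fun i _ => hj i (Finset.mem_univ i))
      _ = r * μ (Λ α ∩ F j) := by simp [nsmul_eq_mul]
  choose j hj using key
  set Λ' : ι → Set K := fun α => (· * gs (j α)) '' Λ α with hΛ'
  -- measurability of Λ α ∩ F j
  have hmeasF : ∀ α, MeasurableSet (Λ α ∩ F (j α)) := by
    intro α
    apply hrefl _ (gs (j α))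
    rw [Set.image_inter_preimage]
    exact (hinv_meas _ _ (hmeas α)).inter hE_meas
  -- measure identities
  have hμΛ' : ∀ α, μ (Λ' α) = μ (Λ α) := fun α => hinv _ _ (hmeas α)
  have hμE : ∀ α, μ (Λ α ∩ F (j α)) = μ (Λ' α ∩ E) := by
    intro α
    rw [← hinv (gs (j α)) _ (hmeasF α), Set.image_inter_preimage]
  refine ⟨Λ', ⟨hleft, fun α => hinv_meas _ _ (hmeas α), ?_, ?_⟩, ?_⟩
  · filter_upwards [hsize] with α hα
    rw [hμΛ' α]; exact hα
  · intro g
    have heq : ∀ α, μ (Λ' α ∆ ((g * ·) '' Λ' α)) / μ (Λ' α)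
        = μ (Λ α ∆ ((g * ·) '' Λ α)) / μ (Λ α) := by
      intro α
      have himg : (g * ·) '' Λ' α = (· * gs (j α)) '' ((g * ·) '' Λ α) := by
        rw [hΛ', Set.image_image, Set.image_image]
        simp only [mul_assoc]
      rw [himg, hΛ', ← Set.image_symmDiff (hinj (gs (j α))),
        hinv _ _ ((hmeas α).symmDiff (hleft g _ (hmeas α))), hμΛ' α]
    simpa only [heq] using hfol g
  · -- liminf bound
    have hclt : (0 : ℝ≥0∞) < ENNReal.ofReal a / r := by
      apply ENNReal.div_pos (by simpa using ha.le.lt_of_ne' (by simpa using ha.ne'))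
      exact ENNReal.natCast_ne_top r
    refine lt_of_lt_of_le hclt (le_liminf_of_le ?_ ?_)
    · exact isCobounded_ge_of_top
    · filter_upwards [hsize] with α hα
      have hint : ENNReal.ofReal a / r * μ (Λ' α) ≤ ∫⁻ x in Λ' α, ENNReal.ofReal (f x) ∂μ := by
        calc ENNReal.ofReal a / r * μ (Λ' α)
            = ENNReal.ofReal a * (μ (Λ α) / r) := by
              rw [hμΛ' α, div_eq_mul_inv, div_eq_mul_inv]; ring
          _ ≤ ENNReal.ofReal a * μ (Λ' α ∩ E) := by
              gcongr
              rw [← hμE α, ENNReal.div_le_iff_le_mul (Or.inl (by exact_mod_cast hr.ne'))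
                (Or.inl (ENNReal.natCast_ne_top r)), mul_comm]
              exact hj α
          _ = ∫⁻ _ in Λ' α ∩ E, ENNReal.ofReal a ∂μ := (setLIntegral_const _ _).symm
          _ ≤ ∫⁻ x in Λ' α ∩ E, ENNReal.ofReal (f x) ∂μ := by
              refine setLIntegral_mono (hf_meas.ennreal_ofReal) (fun x hx => ?_)
              exact ENNReal.ofReal_le_ofReal (hfE x hx.2)
          _ ≤ ∫⁻ x in Λ' α, ENNReal.ofReal (f x) ∂μ :=
              lintegral_mono_set Set.inter_subset_left
      have h0 : μ (Λ' α) ≠ 0 := by rw [hμΛ' α]; exact hα.1.ne'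
      have ht : μ (Λ' α) ≠ ∞ := by rw [hμΛ' α]; exact hα.2.ne
      calc ENNReal.ofReal a / r
          = ENNReal.ofReal a / r * μ (Λ' α) / μ (Λ' α) := by
            rw [mul_div_assoc, ENNReal.div_self h0 ht, mul_one]
        _ ≤ (∫⁻ x in Λ' α, ENNReal.ofReal (f x) ∂μ) / μ (Λ' α) := by gcongr
end

section
/- Let (𝔄, ω, τ, K) be a compact C*-dynamical system with ω a trace and (K, Σ, μ) a Følner semigroup. Let A ∈ 𝔄 be positive with ω(A) > 0, and take any m₀, …, m_k ∈ ℕ ∪ {0}. Assume that the functions g ↦ ω(τ_{g^{m₀}}(A) ⋯ τ_{g^{m_k}}(A)) and g ↦ ‖τ_{g^{m_j}}(A) − A‖_ω (for j = 0, …, k) are Σ-measurable on K. Then there exists a Følner net (Λ_α) in (K, Σ, μ) such that liminf_α (1/μ(Λ_α)) ∫_{Λ_α} |ω(τ_{g^{m₀}}(A) τ_{g^{m₁}}(A) ⋯ τ_{g^{m_k}}(A))| dμ(g) > 0. -/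
open Filter MeasureTheory
open scoped symmDiff ENNReal ComplexOrder

/-- The seminorm `‖A‖_ω = √(ω(A*A))` associated to a positive linear functional `ω`. -/
noncomputable def omegaSeminorm {𝔄 : Type*} [NonUnitalNormedRing 𝔄] [StarRing 𝔄]
    [NormedSpace ℂ 𝔄] (ω : 𝔄 →ₗ[ℂ] ℂ) (A : 𝔄) : ℝ :=
  Real.sqrt (ω (star A * A)).re

/-!
Via the GNS construction, `‖·‖_ω` is the norm of a pre-Hilbert space on which every `τ_g` acts
isometrically, and the orbit of `A` is totally bounded there. Pigeonholing along the totally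
bounded orbit of `(τ_g^n A)_{n ≤ N}` gives for each `g` some `w` with `τ_{gw}^n A` close to `A`
for all `n ≤ N`. As `g ↦ τ_g` is itself totally bounded uniformly on the orbit, finitely many
such `w` serve all `g`: there is a finite `W` with `K = ⋃_{w ∈ W} {x | x w ∈ E}`, `E` being the
set of `g` with `‖τ_g^{m_j} A - A‖_ω < ε` for all `j`. So each `Λ_α` meets some `{x | x w ∈ E}`
in a fraction `≥ 1/|W|` of its measure, and the right translates `Λ_α w` form a Følner net in
which `E` has density `≥ 1/|W|`. On `E` a telescoping estimate, which uses the trace property,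
gives `|ω(τ_{g^{m₀}}(A) ⋯ τ_{g^{m_k}}(A))| ≥ |ω(A^{k+1})| / 2`, and `ω(A^{k+1}) ≠ 0` since
`n ↦ |ω(A^n)|` is log-convex by Cauchy–Schwarz.
-/

open Set
open scoped Finset

theorem Isometry.iterate {X : Type*} [PseudoEMetricSpace X] {f : X → X} (hf : Isometry f) :
    ∀ n, Isometry f^[n]
  | 0 => isometry_id
  | n + 1 => (hf.iterate n).comp hf

theorem TotallyBounded.univ_pi {ι : Type*} {α : ι → Type*} [∀ i, UniformSpace (α i)]
    {s : ∀ i, Set (α i)} (hs : ∀ i, TotallyBounded (s i)) : TotallyBounded (univ.pi s) := by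
  refine totallyBounded_iff_ultrafilter.2 fun F hF => (cauchy_pi_iff' _).2 fun i =>
    totallyBounded_iff_ultrafilter.1 (hs i) (F.map (Function.eval i)) ?_
  exact Filter.le_principal_iff.2 <| Filter.mem_map.2 <|
    Filter.mem_of_superset (Filter.le_principal_iff.1 hF) fun y hy => hy i trivial

theorem Isometry.exists_pos_dist_iterate_lt {Y : Type*} [PseudoMetricSpace Y] {S : Y → Y}
    (hS : Isometry S) {y : Y} (hy : TotallyBounded (range fun n => S^[n] y)) {ε : ℝ}
    (hε : 0 < ε) : ∃ d, 0 < d ∧ dist (S^[d] y) y < ε := by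
  obtain ⟨t, ht, hcover⟩ := Metric.totallyBounded_iff.1 hy (ε / 2) (half_pos hε)
  choose c hct hc using fun n => mem_iUnion₂.1 (hcover (mem_range_self n))
  obtain ⟨a, b, hab, hcab⟩ := ht.exists_lt_map_eq_of_forall_mem hct
  refine ⟨b - a, Nat.sub_pos_of_lt hab, ?_⟩
  have ha := Metric.mem_ball.1 (hc a)
  have hb := Metric.mem_ball.1 (hc b)
  rw [← hcab, ← Nat.add_sub_cancel' hab.le, Function.iterate_add_apply] at hb
  have := dist_triangle_right (S^[a] y) (S^[a] (S^[b - a] y)) (c a)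
  rw [(hS.iterate a).dist_eq, dist_comm] at this
  linarith

theorem TotallyBounded.exists_finset_dist_lt {K Z : Type*} [PseudoMetricSpace Z] {F : K → Z}
    (h : TotallyBounded (range F)) {ε : ℝ} (hε : 0 < ε) :
    ∃ R : Finset K, ∀ g, ∃ r ∈ R, dist (F g) (F r) < ε := by
  obtain ⟨t, hts, ht, hcover⟩ := Metric.finite_approx_of_totallyBounded h ε hε
  rw [← image_univ] at hts
  obtain ⟨s, -, hs, hcover⟩ := exists_subset_image_finite_and
    (p := fun t => range F ⊆ ⋃ z ∈ t, Metric.ball z ε) |>.1 ⟨t, hts, ht, hcover⟩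
  refine ⟨hs.toFinset, fun g => ?_⟩
  obtain ⟨_, ⟨r, hr, rfl⟩, hgr⟩ := mem_iUnion₂.1 (hcover (mem_range_self g))
  exact ⟨r, hs.mem_toFinset.2 hr, hgr⟩

section IsometricAction

variable {K X : Type*} [Semigroup K] {T : K → X → X}

theorem exists_eq_iterate_succ (hT_mul : ∀ g h x, T g (T h x) = T (g * h) x) (g : K) :
    ∀ n, ∃ h, T h = (T g)^[n + 1]
  | 0 => ⟨g, rfl⟩
  | n + 1 =>
    let ⟨h, hh⟩ := exists_eq_iterate_succ hT_mul g n
    ⟨g * h, funext fun x => by rw [Function.iterate_succ_apply', ← hh, hT_mul]⟩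

theorem iterate_mem_insert_range (hT_mul : ∀ g h x, T g (T h x) = T (g * h) x) (g : K) (x : X) :
    ∀ n, (T g)^[n] x ∈ insert x (range fun h => T h x)
  | 0 => mem_insert x _
  | n + 1 =>
    let ⟨h, hh⟩ := exists_eq_iterate_succ hT_mul g n
    mem_insert_of_mem x ⟨h, congrFun hh x⟩

theorem apply_mem_range_of_mem_insert (hT_mul : ∀ g h x, T g (T h x) = T (g * h) x) {x y : X}
    (hy : y ∈ insert x (range fun h => T h x)) (g : K) : T g y ∈ range fun h => T h x := by
  obtain rfl | ⟨h, rfl⟩ := hy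
  · exact mem_range_self g
  · exact ⟨g * h, (hT_mul g h x).symm⟩

variable [PseudoMetricSpace X]

theorem dist_iterate_mul_le (hT_mul : ∀ g h x, T g (T h x) = T (g * h) x)
    (hT : ∀ g, Isometry (T g)) {g r : K} {x : X} {η : ℝ}
    (hgr : ∀ w, dist (T g (T w x)) (T r (T w x)) ≤ η) (h : K) :
    ∀ n : ℕ, dist ((T (g * h))^[n] x) ((T (r * h))^[n] x) ≤ n * η
  | 0 => by simp
  | n + 1 => by
    obtain ⟨w, hw⟩ := apply_mem_range_of_mem_insert hT_mul
      (iterate_mem_insert_range hT_mul (r * h) x n) h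
    simp only [Function.iterate_succ_apply']
    set P := (T (g * h))^[n] x
    set Q := (T (r * h))^[n] x
    calc _ ≤ dist (T (g * h) P) (T (g * h) Q) + dist (T (g * h) Q) (T (r * h) Q) :=
          dist_triangle _ _ _
      _ = dist P Q + dist (T g (T h Q)) (T r (T h Q)) := by
          rw [(hT _).dist_eq, hT_mul g, hT_mul r]
      _ ≤ n * η + η := add_le_add (dist_iterate_mul_le hT_mul hT hgr h n) (hw ▸ hgr w)
      _ = ((n + 1 : ℕ) : ℝ) * η := by push_cast; ring

theorem exists_forall_dist_iterate_mul_lt (hT_mul : ∀ g h x, T g (T h x) = T (g * h) x)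
    (hT : ∀ g, Isometry (T g)) {x : X} (hx : TotallyBounded (range fun g => T g x)) (g : K)
    (N : ℕ) {ε : ℝ} (hε : 0 < ε) : ∃ w, ∀ n ≤ N, dist ((T (g * w))^[n] x) x < ε := by
  -- even exponents, so that `g ^ (2 * d) = g * g ^ (2 * d - 1)` stays inside the semigroup
  let S : (Fin (N + 1) → X) → (Fin (N + 1) → X) := Pi.map fun i => (T g)^[2 * i]
  have hS : Isometry S := Isometry.piMap _ fun i => (hT g).iterate _
  have horbit : TotallyBounded (range fun d => S^[d] fun _ => x) :=
    (TotallyBounded.univ_pi fun _ => (totallyBounded_insert x).2 hx).subset <| by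
      rintro _ ⟨d, rfl⟩ i -
      simp only [S, Pi.map_iterate, Pi.map_apply, ← Function.iterate_mul]
      exact iterate_mem_insert_range hT_mul g x _
  obtain ⟨d, hd, hdist⟩ := hS.exists_pos_dist_iterate_lt horbit hε
  obtain ⟨w, hw⟩ := exists_eq_iterate_succ hT_mul g (2 * d - 2)
  have hgw : T (g * w) = (T g)^[2 * d] := funext fun y => by
    rw [← hT_mul, hw, ← Function.iterate_succ_apply' (T g)]
    congr 1
    omega
  refine ⟨w, fun n hn => ?_⟩
  have := (dist_pi_lt_iff hε).1 hdist ⟨n, by omega⟩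
  simp only [S, Pi.map_iterate, Pi.map_apply, ← Function.iterate_mul] at this
  rwa [hgw, ← Function.iterate_mul, mul_right_comm]

theorem exists_finset_forall_dist_apply_lt (hT_mul : ∀ g h x, T g (T h x) = T (g * h) x)
    (hT : ∀ g, Isometry (T g)) {x : X} (hx : TotallyBounded (range fun g => T g x)) {ε : ℝ}
    (hε : 0 < ε) : ∃ R : Finset K, ∀ g, ∃ r ∈ R, ∀ w, dist (T g (T w x)) (T r (T w x)) < ε := by
  obtain ⟨M, hMx, hM, hcover⟩ := Metric.finite_approx_of_totallyBounded hx (ε / 3) (by positivity)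
  have : Fintype M := hM.fintype
  have hF : TotallyBounded (range fun g (y : M) => T g y) :=
    (TotallyBounded.univ_pi fun _ => hx).subset <| by
      rintro _ ⟨g, rfl⟩ y -
      exact apply_mem_range_of_mem_insert hT_mul (mem_insert_of_mem x (hMx y.2)) g
  obtain ⟨R, hR⟩ := hF.exists_finset_dist_lt (ε := ε / 3) (by positivity)
  refine ⟨R, fun g => ?_⟩
  obtain ⟨r, hr, hgr⟩ := hR g
  refine ⟨r, hr, fun w => ?_⟩
  obtain ⟨y, hyM, hy⟩ := mem_iUnion₂.1 (hcover (mem_range_self w))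
  have hgry := (dist_pi_lt_iff (by positivity)).1 hgr ⟨y, hyM⟩
  rw [Metric.mem_ball] at hy
  calc _ ≤ dist (T g (T w x)) (T g y) + dist (T g y) (T r y) + dist (T r y) (T r (T w x)) :=
        dist_triangle4 _ _ _ _
    _ < ε / 3 + ε / 3 + ε / 3 := by
        rw [(hT g).dist_eq, (hT r).dist_eq, dist_comm y]
        gcongr
    _ = ε := by ring

theorem exists_finset_forall_exists_dist_iterate_mul_lt
    (hT_mul : ∀ g h x, T g (T h x) = T (g * h) x) (hT : ∀ g, Isometry (T g)) {x : X}
    (hx : TotallyBounded (range fun g => T g x)) (N : ℕ) {ε : ℝ} (hε : 0 < ε) :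
    ∃ W : Finset K, ∀ g, ∃ w ∈ W, ∀ n ≤ N, dist ((T (g * w))^[n] x) x < ε := by
  classical
  obtain ⟨R, hR⟩ := exists_finset_forall_dist_apply_lt hT_mul hT hx
    (ε := ε / (2 * (N + 1))) (by positivity)
  choose w hw using fun r => exists_forall_dist_iterate_mul_lt hT_mul hT hx r N (half_pos hε)
  refine ⟨R.image w, fun g => ?_⟩
  obtain ⟨r, hr, hgr⟩ := hR g
  refine ⟨w r, Finset.mem_image_of_mem w hr, fun n hn => ?_⟩
  have hn' : (n : ℝ) * (ε / (2 * (N + 1))) ≤ ε / 2 := by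
    rw [mul_div_assoc', div_le_div_iff₀ (by positivity) two_pos]
    have : (n : ℝ) ≤ N := by exact_mod_cast hn
    nlinarith
  calc _ ≤ dist ((T (g * w r))^[n] x) ((T (r * w r))^[n] x) + dist ((T (r * w r))^[n] x) x :=
        dist_triangle _ _ _
    _ < ε / 2 + ε / 2 := add_lt_add_of_le_of_lt
        ((dist_iterate_mul_le hT_mul hT (fun v => (hgr v).le) (w r) n).trans hn') (hw r n hn)
    _ = ε := add_halves ε

end IsometricAction

section Folner

variable {K : Type*} [Semigroup K] [MeasurableSpace K] {μ : Measure K} {ι : Type*} [Preorder ι]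
  {Λ : ι → Set K}

theorem IsFolnerNet.image_mul_right (hΛ : IsFolnerNet μ Λ)
    (hcancel : ∀ a b c : K, a * c = b * c → a = b)
    (hinv_meas : ∀ (g : K) (S : Set K), MeasurableSet S → MeasurableSet ((· * g) '' S))
    (hinv : ∀ (g : K) (S : Set K), MeasurableSet S → μ ((· * g) '' S) = μ S) (h : ι → K) :
    IsFolnerNet μ fun α => (· * h α) '' Λ α := by
  obtain ⟨hleft, hmeas, hpos, hfol⟩ := hΛ
  have hμ α : μ ((· * h α) '' Λ α) = μ (Λ α) := hinv _ _ (hmeas α)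
  refine ⟨hleft, fun α => hinv_meas _ _ (hmeas α), by simpa only [hμ] using hpos,
    fun g => (hfol g).congr fun α => ?_⟩
  have hcomm : (g * ·) '' ((· * h α) '' Λ α) = (· * h α) '' ((g * ·) '' Λ α) := by
    simp only [image_image, mul_assoc]
  rw [hcomm, ← image_symmDiff fun a b => hcancel a b (h α), hμ,
    hinv _ _ ((hmeas α).symmDiff (hleft g _ (hmeas α)))]

theorem exists_measure_le_card_mul_measure_inter_image_mul_right [Nonempty K]
    (hinv_meas : ∀ (g : K) (S : Set K), MeasurableSet S → MeasurableSet ((· * g) '' S))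
    (hinv : ∀ (g : K) (S : Set K), MeasurableSet S → μ ((· * g) '' S) = μ S)
    (hrefl : ∀ (V : Set K) (g : K), MeasurableSet ((· * g) '' V) → MeasurableSet V)
    {E : Set K} (hE : MeasurableSet E) {W : Finset K} (hW : ∀ x, ∃ w ∈ W, x * w ∈ E)
    {S : Set K} (hS : MeasurableSet S) : ∃ w, μ S ≤ #W * μ (E ∩ (· * w) '' S) := by
  have hreturn w : μ (E ∩ (· * w) '' S) = μ {x ∈ S | x * w ∈ E} := by
    have himage : (· * w) '' {x ∈ S | x * w ∈ E} = E ∩ (· * w) '' S := by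
      ext y
      constructor
      · rintro ⟨x, ⟨hx, hxE⟩, rfl⟩
        exact ⟨hxE, x, hx, rfl⟩
      · rintro ⟨hy, x, hx, rfl⟩
        exact ⟨x, ⟨hx, hy⟩, rfl⟩
    rw [← himage, hinv _ _ (hrefl _ _ (himage ▸ hE.inter (hinv_meas _ _ hS)))]
  have hcover : μ S ≤ ∑ w ∈ W, μ {x ∈ S | x * w ∈ E} := by
    refine (measure_mono fun x hx => ?_).trans (measure_biUnion_finset_le W _)
    obtain ⟨w, hw, hxw⟩ := hW x
    exact mem_biUnion hw ⟨hx, hxw⟩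
  obtain ⟨w, hwW, -⟩ := hW (Classical.arbitrary K)
  obtain ⟨w, -, hw⟩ := ENNReal.exists_le_of_sum_le ⟨w, hwW⟩
    (f := fun _ => μ S) (g := fun w => #W * μ {x ∈ S | x * w ∈ E})
    (by simpa [← Finset.mul_sum] using mul_le_mul_right hcover _)
  exact ⟨w, (hreturn w).symm ▸ hw⟩

theorem IsFolnerNet.exists_measure_le_card_mul_measure_inter (hΛ : IsFolnerNet μ Λ)
    (hcancel : ∀ a b c : K, a * c = b * c → a = b)
    (hinv_meas : ∀ (g : K) (S : Set K), MeasurableSet S → MeasurableSet ((· * g) '' S))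
    (hinv : ∀ (g : K) (S : Set K), MeasurableSet S → μ ((· * g) '' S) = μ S)
    (hrefl : ∀ (V : Set K) (g : K), MeasurableSet ((· * g) '' V) → MeasurableSet V)
    {E : Set K} (hE : MeasurableSet E) {W : Finset K} (hW : ∀ x, ∃ w ∈ W, x * w ∈ E) :
    ∃ Λ' : ι → Set K, IsFolnerNet μ Λ' ∧ ∀ α, μ (Λ' α) ≤ #W * μ (E ∩ Λ' α) := by
  cases isEmpty_or_nonempty K
  · exact ⟨Λ, hΛ, fun α => by simp [eq_empty_of_isEmpty (Λ α)]⟩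
  choose w hw using fun α => exists_measure_le_card_mul_measure_inter_image_mul_right
    hinv_meas hinv hrefl hE hW (hΛ.2.1 α)
  exact ⟨_, hΛ.image_mul_right hcancel hinv_meas hinv w,
    fun α => (hinv _ _ (hΛ.2.1 α)).symm ▸ hw α⟩

theorem IsFolnerNet.div_le_liminf_setLIntegral_div (hΛ : IsFolnerNet μ Λ) {E : Set K}
    (hE : MeasurableSet E) {F : K → ℝ≥0∞} {q : ℝ≥0∞} (hq : ∀ x ∈ E, q ≤ F x) {c : ℝ≥0∞}
    (hc : ∀ α, μ (Λ α) ≤ c * μ (E ∩ Λ α)) :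
    q / c ≤ liminf (fun α => (∫⁻ g in Λ α, F g ∂μ) / μ (Λ α)) atTop := by
  refine le_liminf_of_le (by isBoundedDefault) ?_
  filter_upwards [hΛ.2.2.1] with α ⟨hpos, hfin⟩
  rw [ENNReal.le_div_iff_mul_le (Or.inl hpos.ne') (Or.inl hfin.ne)]
  calc q / c * μ (Λ α) ≤ q / c * (c * μ (E ∩ Λ α)) := by gcongr; exact hc α
    _ ≤ q * μ (E ∩ Λ α) := by
        rw [← mul_assoc]
        gcongr
        rw [mul_comm]
        exact ENNReal.mul_div_le
    _ = ∫⁻ _ in E ∩ Λ α, q ∂μ := (setLIntegral_const _ _).symm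
    _ ≤ ∫⁻ g in E ∩ Λ α, F g ∂μ := setLIntegral_mono' (hE.inter (hΛ.2.1 α)) fun x hx => hq x hx.1
    _ ≤ ∫⁻ g in Λ α, F g ∂μ := lintegral_mono_set inter_subset_right

end Folner

lemma norm_list_ofFn_prod_le {𝔄 : Type*} [NormedRing 𝔄] {n : ℕ} {B : Fin (n + 1) → 𝔄} {R : ℝ}
    (hB : ∀ j, ‖B j‖ ≤ R) : ‖(List.ofFn B).prod‖ ≤ R ^ (n + 1) := by
  refine (List.norm_prod_le' (by simp)).trans ?_
  rw [List.map_ofFn, List.prod_ofFn]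
  exact (Finset.prod_le_prod (fun j _ => norm_nonneg (B j)) (fun j _ => hB j)).trans_eq (by simp)

namespace PositiveLinearMap

variable {𝔄 : Type*} [CStarAlgebra 𝔄] [PartialOrder 𝔄] [StarOrderedRing 𝔄] (f : 𝔄 →ₚ[ℂ] ℂ)

lemma norm_toPreGNS_mul_le (a b : 𝔄) : ‖f.toPreGNS (a * b)‖ ≤ ‖a‖ * ‖f.toPreGNS b‖ :=
  (f.leftMulMapPreGNS a).le_of_opNorm_le
    (LinearMap.mkContinuous_norm_le _ (norm_nonneg a) _) (f.toPreGNS b)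

lemma norm_toPreGNS_star (htr : ∀ a b, f (a * b) = f (b * a)) (a : 𝔄) :
    ‖f.toPreGNS (star a)‖ = ‖f.toPreGNS a‖ := by
  simp only [preGNS_norm_def, ofPreGNS_toPreGNS, star_star, htr a]

lemma norm_toPreGNS_mul_le_of_trace (htr : ∀ a b, f (a * b) = f (b * a)) (a b : 𝔄) :
    ‖f.toPreGNS (a * b)‖ ≤ ‖f.toPreGNS a‖ * ‖b‖ := by
  rw [← norm_toPreGNS_star f htr, star_mul, mul_comm, ← norm_star b,
    ← norm_toPreGNS_star f htr a]
  exact f.norm_toPreGNS_mul_le _ _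

lemma norm_apply_le_norm_toPreGNS (hf : f 1 = 1) (a : 𝔄) : ‖f a‖ ≤ ‖f.toPreGNS a‖ := by
  have hone : ‖f.toPreGNS 1‖ = 1 := by simp [preGNS_norm_def, hf]
  simpa [preGNS_inner_def, hone] using norm_inner_le_norm (𝕜 := ℂ) (f.toPreGNS 1) (f.toPreGNS a)

lemma norm_toPreGNS_sq (a : 𝔄) : ‖f.toPreGNS a‖ ^ 2 = ‖f (star a * a)‖ := by
  simpa using congrArg norm (f.preGNS_norm_sq (f.toPreGNS a))

lemma norm_apply_star_mul_sq_le (a b : 𝔄) :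
    ‖f (star a * b)‖ ^ 2 ≤ ‖f (star a * a)‖ * ‖f (star b * b)‖ := by
  rw [← norm_toPreGNS_sq, ← norm_toPreGNS_sq, ← mul_pow]
  gcongr
  simpa [preGNS_inner_def] using norm_inner_le_norm (𝕜 := ℂ) (f.toPreGNS a) (f.toPreGNS b)

lemma norm_apply_pow_succ_sq_le (c : 𝔄) (s : ℕ) :
    ‖f ((star c * c) ^ (s + 1))‖ ^ 2 ≤
      ‖f ((star c * c) ^ s)‖ * ‖f ((star c * c) ^ (s + 2))‖ := by
  have ha : star (star c * c) = star c * c := IsSelfAdjoint.star_mul_self c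
  have hpow (t u : ℕ) :
      star ((star c * c) ^ t) * (star c * c) ^ u = (star c * c) ^ (t + u) := by
    rw [star_pow, ha, pow_add]
  have hpow' (t u : ℕ) :
      star (c * (star c * c) ^ t) * (c * (star c * c) ^ u) = (star c * c) ^ (t + 1 + u) := by
    rw [star_mul, star_pow, ha, mul_assoc, ← mul_assoc (star c), ← pow_succ', ← pow_add]
    congr 1
    omega
  -- Cauchy–Schwarz with `a ^ t` for even `s`, with `c * a ^ t` for odd `s` (`a = star c * c`)
  obtain ⟨t, rfl | rfl⟩ := s.even_or_odd'
  · convert f.norm_apply_star_mul_sq_le ((star c * c) ^ t) ((star c * c) ^ (t + 1)) using 4 <;>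
      rw [hpow] <;> congr 1 <;> omega
  · convert f.norm_apply_star_mul_sq_le (c * (star c * c) ^ t) (c * (star c * c) ^ (t + 1))
      using 4 <;> rw [hpow'] <;> congr 1 <;> omega

lemma apply_pow_ne_zero {c : 𝔄} (hc : f (star c * c) ≠ 0) (n : ℕ) :
    f ((star c * c) ^ n) ≠ 0 := by
  have step (s : ℕ) (hs : f ((star c * c) ^ (s + 1)) ≠ 0) :
      f ((star c * c) ^ s) ≠ 0 ∧ f ((star c * c) ^ (s + 2)) ≠ 0 := by
    have := f.norm_apply_pow_succ_sq_le c s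
    constructor <;> rintro h <;> simp_all
  have succ (n : ℕ) : f ((star c * c) ^ (n + 1)) ≠ 0 := by
    induction n with
    | zero => simpa using hc
    | succ n ih => exact (step n ih).2
  cases n with
  | zero => exact (step 0 (succ 0)).1
  | succ n => exact succ n

lemma norm_toPreGNS_list_ofFn_prod_sub_le (htr : ∀ a b, f (a * b) = f (b * a)) {R : ℝ} :
    ∀ {n : ℕ} (B C : Fin (n + 1) → 𝔄), (∀ j, ‖B j‖ ≤ R) → (∀ j, ‖C j‖ ≤ R) →
      ‖f.toPreGNS ((List.ofFn B).prod - (List.ofFn C).prod)‖ ≤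
        R ^ n * ∑ j, ‖f.toPreGNS (B j - C j)‖
  | 0, B, C, _, _ => by simp
  | n + 1, B, C, hB, hC => by
    set P := (List.ofFn (Fin.tail B)).prod
    set Q := (List.ofFn (Fin.tail C)).prod
    have hsplit : (List.ofFn B).prod - (List.ofFn C).prod = (B 0 - C 0) * P + C 0 * (P - Q) := by
      rw [List.ofFn_succ (f := B), List.ofFn_succ (f := C), List.prod_cons, List.prod_cons]
      noncomm_ring
    have hR : 0 ≤ R := (norm_nonneg _).trans (hB 0)
    have hPQ := norm_toPreGNS_list_ofFn_prod_sub_le htr (Fin.tail B) (Fin.tail C)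
      (fun j => hB _) (fun j => hC _)
    calc _ ≤ ‖f.toPreGNS (B 0 - C 0)‖ * R ^ (n + 1) +
          R * (R ^ n * ∑ j, ‖f.toPreGNS (Fin.tail B j - Fin.tail C j)‖) := by
          rw [hsplit, map_add]
          refine (norm_add_le _ _).trans (add_le_add ?_ ?_)
          · refine (f.norm_toPreGNS_mul_le_of_trace htr _ _).trans ?_
            gcongr
            exact norm_list_ofFn_prod_le fun j => hB _
          · exact (f.norm_toPreGNS_mul_le _ _).trans (by gcongr; exact hC 0)
      _ = R ^ (n + 1) * ∑ j, ‖f.toPreGNS (B j - C j)‖ := by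
          rw [Fin.sum_univ_succ (fun j => ‖f.toPreGNS (B j - C j)‖)]
          simp only [Fin.tail]
          ring

lemma norm_apply_pow_sub_le (hf : f 1 = 1) (htr : ∀ a b, f (a * b) = f (b * a)) (A : 𝔄)
    {n : ℕ} (B : Fin (n + 1) → 𝔄) (hB : ∀ j, ‖B j‖ ≤ ‖A‖) :
    ‖f (A ^ (n + 1))‖ - ‖A‖ ^ n * ∑ j, ‖f.toPreGNS (B j - A)‖ ≤ ‖f (List.ofFn B).prod‖ := by
  have hA : (List.ofFn fun _ : Fin (n + 1) => A).prod = A ^ (n + 1) := by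
    rw [List.ofFn_const, List.prod_replicate]
  have htele := f.norm_toPreGNS_list_ofFn_prod_sub_le htr B (fun _ => A) hB (fun _ => le_rfl)
  rw [hA] at htele
  have happly := f.norm_apply_le_norm_toPreGNS hf ((List.ofFn B).prod - A ^ (n + 1))
  have htri := norm_sub_norm_le (f (A ^ (n + 1))) (f (List.ofFn B).prod)
  rw [norm_sub_rev, ← map_sub] at htri
  linarith

lemma exists_pos_forall_sub_le_norm_apply_list_ofFn_prod (hf : f 1 = 1)
    (htr : ∀ a b, f (a * b) = f (b * a)) (A : 𝔄) (n : ℕ) {δ : ℝ} (hδ : 0 < δ) :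
    ∃ ε > 0, ∀ B : Fin (n + 1) → 𝔄, (∀ j, ‖B j‖ ≤ ‖A‖) → (∀ j, ‖f.toPreGNS (B j - A)‖ < ε) →
      ‖f (A ^ (n + 1))‖ - δ ≤ ‖f (List.ofFn B).prod‖ := by
  refine ⟨δ / ((n + 1) * (‖A‖ ^ n + 1)), by positivity, fun B hB hBA => ?_⟩
  refine le_trans ?_ (f.norm_apply_pow_sub_le hf htr A B hB)
  have hsum : ∑ j, ‖f.toPreGNS (B j - A)‖ ≤ (n + 1) * (δ / ((n + 1) * (‖A‖ ^ n + 1))) :=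
    (Finset.sum_le_sum fun j _ => (hBA j).le).trans_eq (by simp)
  have hδ' : ‖A‖ ^ n * ((n + 1) * (δ / ((n + 1) * (‖A‖ ^ n + 1)))) ≤ δ := by
    rw [mul_div_assoc', mul_div_assoc', div_le_iff₀ (by positivity)]
    nlinarith [pow_nonneg (norm_nonneg A) n]
  nlinarith [pow_nonneg (norm_nonneg A) n]

theorem exists_finset_forall_exists_norm_toPreGNS_iterate_sub_lt {K : Type*} [Semigroup K]
    (τ : K → 𝔄 →ₗ[ℂ] 𝔄) (hτ_mul : ∀ g h A, τ g (τ h A) = τ (g * h) A)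
    (hτ : ∀ g A, ‖f.toPreGNS (τ g A)‖ = ‖f.toPreGNS A‖) {A : 𝔄}
    (hA : ∀ ε > 0, ∃ M : Finset 𝔄, ∀ g, ∃ B ∈ M, ‖f.toPreGNS (τ g A - B)‖ < ε)
    (N : ℕ) {ε : ℝ} (hε : 0 < ε) :
    ∃ W : Finset K, ∀ g, ∃ w ∈ W, ∀ n ≤ N, ‖f.toPreGNS ((τ (g * w))^[n] A - A)‖ < ε := by
  let T g (x : f.PreGNS) := f.toPreGNS (τ g (f.ofPreGNS x))
  have hT g : Isometry (T g) := Isometry.of_dist_eq fun x y => by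
    simp only [T, dist_eq_norm, ← map_sub, hτ]
    rfl
  have hTB : TotallyBounded (range fun g => T g (f.toPreGNS A)) := by
    refine Metric.totallyBounded_iff.2 fun ε hε => ?_
    obtain ⟨M, hM⟩ := hA ε hε
    refine ⟨f.toPreGNS '' M, M.finite_toSet.image _, ?_⟩
    rintro _ ⟨g, rfl⟩
    obtain ⟨B, hB, hgB⟩ := hM g
    exact mem_biUnion (mem_image_of_mem _ hB) (by simpa [dist_eq_norm, ← map_sub, T] using hgB)
  obtain ⟨W, hW⟩ := exists_finset_forall_exists_dist_iterate_mul_lt (T := T)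
    (fun g h x => congrArg f.toPreGNS (hτ_mul g h _)) hT hTB N hε
  refine ⟨W, fun g => (hW g).imp fun w ⟨hw, hgw⟩ => ⟨hw, fun n hn => ?_⟩⟩
  rw [map_sub, ← dist_eq_norm]
  exact hgw n hn

end PositiveLinearMap

theorem szemeredi_property_compact_CStar_system_general
    {𝔄 : Type*} [NormedRing 𝔄] [StarRing 𝔄] [CStarRing 𝔄] [NormedAlgebra ℂ 𝔄]
    [StarModule ℂ 𝔄] [CompleteSpace 𝔄]
    {K : Type*} [Semigroup K] [MeasurableSpace K]
    {ι : Type*} [Preorder ι]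
    (μ : Measure K)
    (ω : 𝔄 →ₗ[ℂ] ℂ) (τ : K → 𝔄 →ₗ[ℂ] 𝔄)
    -- `ω` is a trace:
    (hω_pos : ∀ A : 𝔄, 0 ≤ ω (star A * A))
    (hω_one : ω 1 = 1)
    (hω_tr : ∀ A B : 𝔄, ω (A * B) = ω (B * A))
    -- `(𝔄, ω, τ, K)` is a compact C*-dynamical system:
    (hτ_mul : ∀ g h : K, ∀ A : 𝔄, τ g (τ h A) = τ (g * h) A)
    (hτ_ω : ∀ g : K, ∀ A : 𝔄, omegaSeminorm ω (τ g A) = omegaSeminorm ω A)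
    (hτ_norm : ∀ g : K, ∀ A : 𝔄, ‖τ g A‖ ≤ ‖A‖)
    (hcompact : ∀ A : 𝔄, ∀ ε : ℝ, 0 < ε → ∃ M : Finset 𝔄, ∀ g : K,
      ∃ B ∈ M, omegaSeminorm ω (τ g A - B) < ε)
    -- `(K, Σ, μ)` is a Følner semigroup:
    (hcancel : ∀ a b c : K, a * c = b * c → a = b)
    (hinv_meas : ∀ (g : K) (S : Set K), MeasurableSet S → MeasurableSet ((· * g) '' S))
    (hinv : ∀ (g : K) (S : Set K), MeasurableSet S → μ ((· * g) '' S) = μ S)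
    (hrefl : ∀ (V : Set K) (g : K), MeasurableSet ((· * g) '' V) → MeasurableSet V)
    (Λ : ι → Set K) (hΛ : IsFolnerNet μ Λ)
    -- the data of the theorem:
    (A : 𝔄) (hA : ∃ c : 𝔄, A = star c * c) (hωA : 0 < ω A)
    (k : ℕ) (m : Fin (k + 1) → ℕ)
    (hmeas₂ : ∀ j : Fin (k + 1),
      Measurable fun g : K => omegaSeminorm ω ((fun B => τ g B)^[m j] A - A)) :
    ∃ Λ' : ι → Set K, IsFolnerNet μ Λ' ∧
      0 < liminf (fun α =>
        (∫⁻ g in Λ' α, ENNReal.ofReal ‖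
          (ω (List.ofFn fun j : Fin (k + 1) => (fun B => τ g B)^[m j] A).prod)‖ ∂μ) /
            μ (Λ' α)) atTop := by
  -- in the spectral order `ω` is a positive linear map, so the GNS construction applies
  let : CStarAlgebra 𝔄 := {}
  let := CStarAlgebra.spectralOrder 𝔄
  let := CStarAlgebra.spectralOrderedRing 𝔄
  let f : 𝔄 →ₚ[ℂ] ℂ := .mk₀ ω fun a ha => by
    obtain ⟨c, rfl⟩ := CStarAlgebra.nonneg_iff_eq_star_mul_self.1 ha
    exact hω_pos c
  obtain ⟨c, rfl⟩ := hA
  have hu : 0 < ‖ω ((star c * c) ^ (k + 1))‖ := norm_pos_iff.2 (f.apply_pow_ne_zero hωA.ne' _)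
  obtain ⟨ε, hε, hprod⟩ := f.exists_pos_forall_sub_le_norm_apply_list_ofFn_prod hω_one hω_tr
    (star c * c) k (half_pos hu)
  obtain ⟨W, hW⟩ := f.exists_finset_forall_exists_norm_toPreGNS_iterate_sub_lt τ hτ_mul hτ_ω
    (hcompact _ · ·) (Finset.univ.sup m) hε
  set E := {g : K | ∀ j, omegaSeminorm ω ((fun B => τ g B)^[m j] (star c * c) - star c * c) < ε}
  have hE : MeasurableSet E := by
    simp only [E, ofPred_forall]
    exact .iInter fun j => measurableSet_lt (hmeas₂ j) measurable_const
  obtain ⟨Λ', hΛ', hcard⟩ := hΛ.exists_measure_le_card_mul_measure_inter hcancel hinv_meas hinv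
    hrefl hE fun g => (hW g).imp fun w ⟨hw, hgw⟩ =>
      ⟨hw, fun j => hgw _ (Finset.le_sup (Finset.mem_univ j))⟩
  refine ⟨Λ', hΛ', (ENNReal.div_pos ?_ (ENNReal.natCast_ne_top _)).trans_le
    (hΛ'.div_le_liminf_setLIntegral_div hE
      (q := ENNReal.ofReal (‖ω ((star c * c) ^ (k + 1))‖ / 2)) (fun g hg => ?_) hcard)⟩
  · exact (ENNReal.ofReal_pos.2 (half_pos hu)).ne'
  · refine ENNReal.ofReal_le_ofReal <| (sub_half _).symm.trans_le <| hprod _ (fun j =>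
      Function.Iterate.rec (‖·‖ ≤ ‖star c * c‖) le_rfl (fun B hB => (hτ_norm g B).trans hB) _) hg

/-- Theorem 4.3 (the Szemerédi property for compact C*-dynamical systems): let
`(𝔄, ω, τ, K)` be a compact C*-dynamical system with `ω` a trace and `(K, Σ, μ)` a
Følner semigroup, let `A ∈ 𝔄` be positive with `ω(A) > 0`, let
`m₀, …, m_k ∈ ℕ ∪ {0}`, and assume the relevant functions of `g` are `Σ`-measurable.
Then there is a Følner net `(Λ_α)` with
`liminf_α (1/μ(Λ_α)) ∫_{Λ_α} |ω(τ_{g^{m₀}}(A) ⋯ τ_{g^{m_k}}(A))| dμ(g) > 0`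
(here `τ_{g^{m_j}}` is realised as the `m_j`-th iterate of `τ_g`, with `τ_{g⁰}(A) = A`). -/
theorem szemeredi_property_compact_CStar_system
    {𝔄 : Type*} [NormedRing 𝔄] [StarRing 𝔄] [CStarRing 𝔄] [NormedAlgebra ℂ 𝔄]
    [StarModule ℂ 𝔄] [CompleteSpace 𝔄]
    {K : Type*} [Semigroup K] [MeasurableSpace K]
    {ι : Type*} [Preorder ι] [Nonempty ι] [IsDirected ι (· ≤ ·)]
    (μ : Measure K)
    (ω : 𝔄 →ₗ[ℂ] ℂ) (τ : K → 𝔄 →ₗ[ℂ] 𝔄)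
    -- `ω` is a trace:
    (hω_pos : ∀ A : 𝔄, 0 ≤ ω (star A * A))
    (hω_one : ω 1 = 1)
    (hω_tr : ∀ A B : 𝔄, ω (A * B) = ω (B * A))
    -- `(𝔄, ω, τ, K)` is a compact C*-dynamical system:
    (hτ_mul : ∀ g h : K, ∀ A : 𝔄, τ g (τ h A) = τ (g * h) A)
    (hτ_ω : ∀ g : K, ∀ A : 𝔄, omegaSeminorm ω (τ g A) = omegaSeminorm ω A)
    (hτ_norm : ∀ g : K, ∀ A : 𝔄, ‖τ g A‖ ≤ ‖A‖)
    (hcompact : ∀ A : 𝔄, ∀ ε : ℝ, 0 < ε → ∃ M : Finset 𝔄, ∀ g : K,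
      ∃ B ∈ M, omegaSeminorm ω (τ g A - B) < ε)
    -- `(K, Σ, μ)` is a Følner semigroup:
    (hcancel : ∀ a b c : K, a * c = b * c → a = b)
    (hinv_meas : ∀ (g : K) (S : Set K), MeasurableSet S → MeasurableSet ((· * g) '' S))
    (hinv : ∀ (g : K) (S : Set K), MeasurableSet S → μ ((· * g) '' S) = μ S)
    (hrefl : ∀ (V : Set K) (g : K), MeasurableSet ((· * g) '' V) → MeasurableSet V)
    (Λ : ι → Set K) (hΛ : IsFolnerNet μ Λ)
    -- the data of the theorem:
    (A : 𝔄) (hA : ∃ c : 𝔄, A = star c * c) (hωA : 0 < ω A)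
    (k : ℕ) (m : Fin (k + 1) → ℕ)
    (hmeas₁ : Measurable fun g : K =>
      ω (List.ofFn fun j : Fin (k + 1) => (fun B => τ g B)^[m j] A).prod)
    (hmeas₂ : ∀ j : Fin (k + 1),
      Measurable fun g : K => omegaSeminorm ω ((fun B => τ g B)^[m j] A - A)) :
    ∃ Λ' : ι → Set K, IsFolnerNet μ Λ' ∧
      0 < liminf (fun α =>
        (∫⁻ g in Λ' α, ENNReal.ofReal ‖
          (ω (List.ofFn fun j : Fin (k + 1) => (fun B => τ g B)^[m j] A).prod)‖ ∂μ) /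
            μ (Λ' α)) atTop :=
  szemeredi_property_compact_CStar_system_general μ ω τ hω_pos hω_one hω_tr hτ_mul hτ_ω hτ_norm
    hcompact hcancel hinv_meas hinv hrefl Λ hΛ A hA hωA k m hmeas₂
end
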